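/- arXiv:2501.16850 — 2 statements merged into one kernel-verified Lean document; each statement's English description precedes it below -/
import Mathlib

section
/- (Discrete duality with piecewise constant gradients.) In the finite discrete setting, there exists u ∈ E minimizing J over E, the constraint set C := {τ : T → ℝ^d : Σ_{t∈T} μ_t τ_t·(G w)_t = ℓ(w) for all w ∈ E} is nonempty, there exists σ ∈ C minimizing J* over C, and min_{v ∈ E} J(v) = − min_{τ ∈ C} J*(τ). -/
open MeasureTheory

/-- The convex conjugate `φ*(r) = sup_{s ≥ 0} (r s − φ(s))`. -/
noncomputable def conj (φ : ℝ → ℝ) (r : ℝ) : ℝ :=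
  ⨆ s : Set.Ici (0:ℝ), (r * (s : ℝ) - φ (s : ℝ))

/-- The right-continuous inverse `(φ')⁻¹(t) = sup {r ≥ 0 : φ'(r) ≤ t}`. -/
noncomputable def rcInv (φ' : ℝ → ℝ) (t : ℝ) : ℝ :=
  sSup {r : ℝ | 0 ≤ r ∧ φ' r ≤ t}

/-- An N-function `φ : [0,∞) → [0,∞)` with (right-continuous, non-decreasing)
density `φ'`, modeled by functions on `ℝ` restricted to `[0,∞)`. -/
structure IsNFunction (φ φ' : ℝ → ℝ) : Prop where
  continuousOn : ContinuousOn φ (Set.Ici 0)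
  convexOn : ConvexOn ℝ (Set.Ici 0) φ
  nonneg : ∀ t ∈ Set.Ici (0:ℝ), 0 ≤ φ t
  deriv_nonneg : ∀ t ∈ Set.Ici (0:ℝ), 0 ≤ φ' t
  deriv_mono : MonotoneOn φ' (Set.Ici 0)
  deriv_rightCont : ∀ t ∈ Set.Ici (0:ℝ), ContinuousWithinAt φ' (Set.Ici t) t
  eq_integral : ∀ t ∈ Set.Ici (0:ℝ), φ t = ∫ s in (0:ℝ)..t, φ' s
  deriv_zero : φ' 0 = 0
  deriv_pos : ∀ t > (0:ℝ), 0 < φ' t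
  deriv_tendsto : Filter.Tendsto φ' Filter.atTop Filter.atTop

/-!
The primal energy `J v = ∑ₜ μₜ φ(|(G v)ₜ|) - ℓ v` is continuous and, because `φ` grows
superlinearly and `G` is injective, coercive on the finite-dimensional space `E`; so it has a
minimizer `u`. Minimality of `u` says that the open strict epigraph of the convex function
`η ↦ ∑ₜ μₜ φ(|ηₜ|)` misses the affine set `{(G u + G v, ∑ₜ μₜ φ(|(G u)ₜ|) + ℓ v)}`, and a separating
hyperplane is a subgradient `g` at `G u` with `g ∘ G = ℓ`. Its Riesz representative `σ` with
respect to the weights `μ` satisfies the divergence constraint, and the subgradient inequality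
decouples into `σₜ ∈ ∂(φ ∘ |·|)((G u)ₜ)` for each `t`, the equality case of Fenchel–Young; hence
`J* σ = -J u`. Summing the Fenchel–Young inequality gives `-J* τ ≤ J v` for all `τ ∈ C`, `v ∈ E`.
-/

open Set Filter

/-- The discrete modular `∑ₜ μₜ ψ(|ηₜ|)`: the primal energy is `modular μ φ (G v) - ℓ v` and
the dual energy is `modular μ (conj φ)`. -/
def modular {T F : Type*} [Fintype T] [Norm F] (μ : T → ℝ) (ψ : ℝ → ℝ) (η : T → F) : ℝ :=
  ∑ t, μ t * ψ ‖η t‖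

namespace IsNFunction

variable {φ φ' : ℝ → ℝ} {T : Type*} [Fintype T] {μ : T → ℝ}

theorem map_zero (hN : IsNFunction φ φ') : φ 0 = 0 := by
  simpa using hN.eq_integral 0 self_mem_Ici

theorem intervalIntegrable_deriv (hN : IsNFunction φ φ') {a b : ℝ} (ha : 0 ≤ a) (hab : a ≤ b) :
    IntervalIntegrable φ' volume a b :=
  (hN.deriv_mono.mono fun _ hx => ha.trans (uIcc_of_le hab ▸ hx).1).intervalIntegrable

theorem sub_eq_integral (hN : IsNFunction φ φ') {a b : ℝ} (ha : 0 ≤ a) (hab : a ≤ b) :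
    φ b - φ a = ∫ s in a..b, φ' s := by
  rw [hN.eq_integral b (ha.trans hab), hN.eq_integral a ha, sub_eq_iff_eq_add',
    intervalIntegral.integral_add_adjacent_intervals (hN.intervalIntegrable_deriv le_rfl ha)
      (hN.intervalIntegrable_deriv ha hab)]

theorem monotoneOn (hN : IsNFunction φ φ') : MonotoneOn φ (Ici 0) := by
  intro a ha b _ hab
  have : 0 ≤ ∫ s in a..b, φ' s :=
    intervalIntegral.integral_nonneg hab fun s hs => hN.deriv_nonneg s (le_trans ha hs.1)
  linarith [hN.sub_eq_integral ha hab]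

theorem exists_mul_sub_le (hN : IsNFunction φ φ') (M : ℝ) :
    ∃ B, ∀ s, 0 ≤ s → M * s - B ≤ φ s := by
  obtain ⟨s₀, hs₀, hM⟩ : ∃ s₀, 0 ≤ s₀ ∧ ∀ s, s₀ ≤ s → max M 0 ≤ φ' s := by
    obtain ⟨s₁, hs₁⟩ := eventually_atTop.mp (hN.deriv_tendsto.eventually_ge_atTop (max M 0))
    exact ⟨max s₁ 0, le_max_right _ _, fun s hs => hs₁ s ((le_max_left _ _).trans hs)⟩
  refine ⟨max M 0 * s₀, fun s hs => ?_⟩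
  have hMs : M * s ≤ max M 0 * s := mul_le_mul_of_nonneg_right (le_max_left _ _) hs
  rcases le_total s s₀ with hss₀ | hs₀s
  · nlinarith [hN.nonneg s hs, le_max_right M 0]
  · have := intervalIntegral.integral_mono_on hs₀s intervalIntegrable_const
      (hN.intervalIntegrable_deriv hs₀ hs₀s) fun x hx => hM x hx.1
    rw [intervalIntegral.integral_const, smul_eq_mul] at this
    linarith [hN.sub_eq_integral hs₀ hs₀s, hN.nonneg s₀ hs₀]

theorem bddAbove_range_conj (hN : IsNFunction φ φ') (r : ℝ) :
    BddAbove (range fun s : Ici (0 : ℝ) => r * s - φ s) := by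
  obtain ⟨B, hB⟩ := hN.exists_mul_sub_le r
  exact ⟨B, by rintro _ ⟨⟨s, hs⟩, rfl⟩; linarith [hB s hs]⟩

theorem mul_sub_le_conj (hN : IsNFunction φ φ') (r : ℝ) {s : ℝ} (hs : 0 ≤ s) :
    r * s - φ s ≤ conj φ r :=
  le_ciSup (hN.bddAbove_range_conj r) ⟨s, hs⟩

theorem continuous_comp_norm (hN : IsNFunction φ φ') {F : Type*} [SeminormedAddCommGroup F] :
    Continuous fun y : F => φ ‖y‖ :=
  hN.continuousOn.comp_continuous continuous_norm fun y => norm_nonneg y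

section Normed

variable {F : Type*} [NormedAddCommGroup F] [NormedSpace ℝ F]

theorem convexOn_comp_norm (hN : IsNFunction φ φ') : ConvexOn ℝ univ fun y : F => φ ‖y‖ := by
  refine ⟨convex_univ, fun x _ y _ a b ha hb hab => ?_⟩
  calc φ ‖a • x + b • y‖ ≤ φ (a * ‖x‖ + b * ‖y‖) :=
        hN.monotoneOn (norm_nonneg _) (mem_Ici.2 (by positivity))
          (convexOn_univ_norm.2 trivial trivial ha hb hab)
    _ ≤ a * φ ‖x‖ + b * φ ‖y‖ := hN.convexOn.2 (norm_nonneg x) (norm_nonneg y) ha hb hab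

end Normed

section Inner

variable {F : Type*} [NormedAddCommGroup F] [InnerProductSpace ℝ F]

theorem inner_le_add_conj (hN : IsNFunction φ φ') (σ x : F) :
    inner ℝ σ x ≤ φ ‖x‖ + conj φ ‖σ‖ := by
  linarith [real_inner_le_norm σ x, hN.mul_sub_le_conj ‖σ‖ (norm_nonneg x)]

theorem conj_norm_eq_of_subgradient (hN : IsNFunction φ φ') {σ x : F}
    (h : ∀ y, φ ‖x‖ + inner ℝ σ (y - x) ≤ φ ‖y‖) :
    conj φ ‖σ‖ = inner ℝ σ x - φ ‖x‖ := by
  refine le_antisymm (ciSup_le fun ⟨s, (hs : 0 ≤ s)⟩ => ?_) (by linarith [hN.inner_le_add_conj σ x])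
  rcases eq_or_ne σ 0 with rfl | hσ
  · have := h 0
    simp only [inner_zero_left, norm_zero, add_zero, hN.map_zero] at this ⊢
    linarith [hN.nonneg s hs]
  · -- test the subgradient inequality at the point of norm `s` in the direction of `σ`
    have hσ₀ : 0 < ‖σ‖ := norm_pos_iff.2 hσ
    have hy := h ((s / ‖σ‖) • σ)
    rw [norm_smul, Real.norm_eq_abs, abs_of_nonneg (by positivity), div_mul_cancel₀ _ hσ₀.ne',
      inner_sub_right, real_inner_smul_right, real_inner_self_eq_norm_mul_norm] at hy
    have : s / ‖σ‖ * (‖σ‖ * ‖σ‖) = ‖σ‖ * s := by field_simp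
    dsimp only
    linarith

end Inner

theorem continuous_modular (hN : IsNFunction φ φ') {F : Type*} [SeminormedAddCommGroup F] :
    Continuous (modular μ φ : (T → F) → ℝ) :=
  continuous_finsetSum _ fun t _ =>
    continuous_const.mul (hN.continuous_comp_norm.comp (continuous_apply t))

theorem exists_mul_norm_sub_le_modular (hN : IsNFunction φ φ') (hμ : ∀ t, 0 < μ t)
    {F : Type*} [SeminormedAddCommGroup F] (M : ℝ) :
    ∃ B, ∀ η : T → F, M * ‖η‖ - B ≤ modular μ φ η := by
  choose B hB using fun t => hN.exists_mul_sub_le (max M 0 / μ t)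
  refine ⟨∑ t, μ t * B t, fun η => ?_⟩
  have hterm : ∀ t, max M 0 * ‖η t‖ - μ t * B t ≤ μ t * φ ‖η t‖ := fun t => by
    have := mul_le_mul_of_nonneg_left (hB t ‖η t‖ (norm_nonneg _)) (hμ t).le
    rwa [mul_sub, ← mul_assoc, mul_div_cancel₀ _ (hμ t).ne'] at this
  have hnorm : ‖η‖ ≤ ∑ t, ‖η t‖ :=
    (pi_norm_le_iff_of_nonneg (by positivity)).2 fun t =>
      Finset.single_le_sum (fun t _ => norm_nonneg (η t)) (Finset.mem_univ t)
  calc M * ‖η‖ - ∑ t, μ t * B t ≤ max M 0 * ∑ t, ‖η t‖ - ∑ t, μ t * B t := by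
        refine sub_le_sub_right ?_ _
        exact (mul_le_mul_of_nonneg_right (le_max_left M 0) (norm_nonneg η)).trans
          (mul_le_mul_of_nonneg_left hnorm (le_max_right M 0))
    _ ≤ modular μ φ η := by
        simpa only [modular, Finset.mul_sum, ← Finset.sum_sub_distrib] using
          Finset.sum_le_sum fun t _ => hterm t

theorem convexOn_modular (hN : IsNFunction φ φ') (hμ : ∀ t, 0 ≤ μ t) {F : Type*}
    [NormedAddCommGroup F] [NormedSpace ℝ F] :
    ConvexOn ℝ univ (modular μ φ : (T → F) → ℝ) := by
  refine ⟨convex_univ, fun x _ y _ a b ha hb hab => ?_⟩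
  have hle : ∀ t, μ t * φ ‖a • x t + b • y t‖ ≤ a * (μ t * φ ‖x t‖) + b * (μ t * φ ‖y t‖) :=
    fun t => by
      have := hN.convexOn_comp_norm.2 (mem_univ (x t)) (mem_univ (y t)) ha hb hab
      rw [smul_eq_mul, smul_eq_mul] at this
      nlinarith [mul_le_mul_of_nonneg_left this (hμ t)]
  simpa only [modular, Pi.add_apply, Pi.smul_apply, smul_eq_mul, Finset.mul_sum,
    ← Finset.sum_add_distrib] using
    Finset.sum_le_sum fun t _ => hle t

section Inner

variable {F : Type*} [NormedAddCommGroup F] [InnerProductSpace ℝ F]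

theorem sum_inner_le_modular_add_modular_conj (hN : IsNFunction φ φ') (hμ : ∀ t, 0 ≤ μ t)
    (σ η : T → F) :
    ∑ t, μ t * inner ℝ (σ t) (η t) ≤ modular μ φ η + modular μ (conj φ) σ := by
  simpa only [modular, mul_add, Finset.sum_add_distrib] using
    Finset.sum_le_sum fun t _ => mul_le_mul_of_nonneg_left (hN.inner_le_add_conj (σ t) (η t)) (hμ t)

theorem modular_conj_eq_of_subgradient (hN : IsNFunction φ φ') (hμ : ∀ t, 0 < μ t) {σ x : T → F}
    (h : ∀ η, modular μ φ x + ∑ t, μ t * inner ℝ (σ t) (η t - x t) ≤ modular μ φ η) :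
    modular μ (conj φ) σ = ∑ t, μ t * inner ℝ (σ t) (x t) - modular μ φ x := by
  classical
  -- the subgradient inequality decouples: perturb `x` in the single coordinate `t`
  have hloc : ∀ t y, φ ‖x t‖ + inner ℝ (σ t) (y - x t) ≤ φ ‖y‖ := fun t y => by
    have hsum := h (Function.update x t y)
    have hsingle : ∑ t', (μ t' * φ ‖Function.update x t y t'‖ - μ t' * φ ‖x t'‖
          - μ t' * inner ℝ (σ t') (Function.update x t y t' - x t')) =
        μ t * (φ ‖y‖ - φ ‖x t‖ - inner ℝ (σ t) (y - x t)) := by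
      rw [Finset.sum_eq_single t (fun t' _ ht' => by simp [Function.update_of_ne ht'])
        (by simp)]
      simp only [Function.update_self]
      ring
    have hD : 0 ≤ μ t * (φ ‖y‖ - φ ‖x t‖ - inner ℝ (σ t) (y - x t)) := by
      simp only [modular] at hsum
      rw [← hsingle, Finset.sum_sub_distrib, Finset.sum_sub_distrib]
      linarith
    linarith [(mul_nonneg_iff_of_pos_left (hμ t)).1 hD]
  simp only [modular, hN.conj_norm_eq_of_subgradient (hloc _), mul_sub, Finset.sum_sub_distrib]

end Inner

end IsNFunction

theorem exists_forall_comp_sub_le_of_superlinear {E X : Type*} [AddCommGroup E] [Module ℝ E]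
    [FiniteDimensional ℝ E] [NormedAddCommGroup X] [NormedSpace ℝ X]
    (A : E →ₗ[ℝ] X) (hA : Function.Injective A) {F : X → ℝ} (hF : Continuous F)
    (hgrowth : ∀ M, ∃ B, ∀ x, M * ‖x‖ - B ≤ F x) (ℓ : E →ₗ[ℝ] ℝ) :
    ∃ u, ∀ v, F (A u) - ℓ u ≤ F (A v) - ℓ v := by
  -- `E` carries no topology: give it the norm pulled back along the injective `A`
  let : NormedAddCommGroup E := NormedAddCommGroup.induced E X A hA
  let : NormedSpace ℝ E := NormedSpace.induced ℝ E X A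
  have := FiniteDimensional.proper_real E
  let ℓc : E →L[ℝ] ℝ := LinearMap.toContinuousLinearMap ℓ
  obtain ⟨B, hB⟩ := hgrowth (‖ℓc‖ + 1)
  have hcoercive : ∀ v : E, ‖v‖ - B ≤ F (A v) - ℓ v := fun v => by
    have hℓ : ℓ v ≤ ‖ℓc‖ * ‖v‖ := (le_abs_self _).trans (ℓc.le_opNorm v)
    have hAv : ‖A v‖ = ‖v‖ := rfl
    have := hB (A v)
    rw [hAv] at this
    linarith
  refine ((hF.comp A.continuous_of_finiteDimensional).sub ℓc.continuous).exists_forall_le ?_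
  exact tendsto_atTop_mono hcoercive
    (tendsto_atTop_add_const_right _ _ tendsto_norm_cocompact_atTop)

theorem exists_subgradient_comp_eq {X E : Type*} [NormedAddCommGroup X] [NormedSpace ℝ X]
    [AddCommGroup E] [Module ℝ E] {F : X → ℝ} (hconv : ConvexOn ℝ univ F) (hcont : Continuous F)
    (A : E →ₗ[ℝ] X) (ℓ : E →ₗ[ℝ] ℝ) {x₀ : X} (hmin : ∀ v, F x₀ + ℓ v ≤ F (x₀ + A v)) :
    ∃ g : X →L[ℝ] ℝ, (∀ v, g (A v) = ℓ v) ∧ ∀ y, F x₀ + g (y - x₀) ≤ F y := by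
  let S : Set (X × ℝ) := {p | p.1 ∈ univ ∧ F p.1 < p.2}
  let L : Set (X × ℝ) := (fun p => (x₀, F x₀) + p) '' (A.prod ℓ '' univ)
  have hS : IsOpen S := by
    have : IsOpen {p : X × ℝ | F p.1 < p.2} := isOpen_lt (hcont.comp continuous_fst) continuous_snd
    simpa only [S, mem_univ, true_and] using this
  have hdisj : Disjoint S L := by
    refine Set.disjoint_left.2 fun p hpS hpL => ?_
    obtain ⟨_, ⟨v, -, rfl⟩, rfl⟩ := hpL
    exact (hmin v).not_gt hpS.2
  obtain ⟨f, c, hfS, hfL⟩ := geometric_hahn_banach_open hconv.convex_strict_epigraph hS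
    ((convex_univ.linear_image _).translate _) hdisj
  set α := f (0, 1)
  let g₀ : X →L[ℝ] ℝ := f.comp (ContinuousLinearMap.inl ℝ X ℝ)
  have hf : ∀ y r, f (y, r) = g₀ y + r * α := fun y r => by
    rw [show ((y, r) : X × ℝ) = (y, 0) + r • (0, 1) by simp, map_add, map_smul, smul_eq_mul]
    rfl
  have hS' : ∀ y r, F y < r → g₀ y + r * α < c := fun y r h => hf y r ▸ hfS _ ⟨mem_univ y, h⟩
  have hL' : ∀ v, c ≤ g₀ (x₀ + A v) + (F x₀ + ℓ v) * α := fun v =>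
    hf _ _ ▸ hfL _ ⟨_, ⟨v, mem_univ v, rfl⟩, rfl⟩
  have hL₀ : c ≤ g₀ x₀ + F x₀ * α := by simpa using hL' 0
  have hα : α < 0 := by linarith [hS' x₀ (F x₀ + 1) (by linarith)]
  have hupper : ∀ y, g₀ y + F y * α ≤ c := fun y =>
    le_of_forall_pos_lt_add fun δ hδ => by
      have := hS' y (F y + δ / -α) (by linarith [div_pos hδ (neg_pos.2 hα)])
      rw [add_mul, div_mul_eq_mul_div, div_neg, mul_div_cancel_right₀ _ hα.ne] at this
      linarith
  have hx₀ : g₀ x₀ + F x₀ * α = c := le_antisymm (hupper x₀) hL₀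
  have hA : ∀ v, g₀ (A v) = -α * ℓ v := fun v => by
    have h₁ := hL' v
    have h₂ := hL' (-v)
    simp only [map_add, map_neg] at h₁ h₂
    linarith
  refine ⟨(-α)⁻¹ • g₀, fun v => ?_, fun y => ?_⟩
  · change (-α)⁻¹ * g₀ (A v) = ℓ v
    rw [hA, ← mul_assoc, inv_mul_cancel₀ (neg_ne_zero.2 hα.ne), one_mul]
  · have := hupper y
    change F x₀ + (-α)⁻¹ * g₀ (y - x₀) ≤ F y
    rw [map_sub, ← le_sub_iff_add_le', inv_mul_le_iff₀ (neg_pos.2 hα)]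
    linarith

theorem exists_sum_mul_inner_eq {T F : Type*} [Fintype T] [NormedAddCommGroup F]
    [InnerProductSpace ℝ F] [CompleteSpace F] {μ : T → ℝ} (hμ : ∀ t, μ t ≠ 0)
    (g : (T → F) →L[ℝ] ℝ) : ∃ σ : T → F, ∀ η, ∑ t, μ t * inner ℝ (σ t) (η t) = g η := by
  classical
  refine ⟨fun t => (μ t)⁻¹ • (InnerProductSpace.toDual ℝ F).symm
    (g.comp (ContinuousLinearMap.single ℝ (fun _ => F) t)), fun η => ?_⟩
  simp only [real_inner_smul_left, InnerProductSpace.toDual_symm_apply, ← mul_assoc,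
    mul_inv_cancel₀ (hμ _), one_mul, ContinuousLinearMap.comp_apply,
    ContinuousLinearMap.single_apply, ← map_sum, Finset.univ_sum_single]

theorem discrete_duality_general {d : ℕ}
    {T : Type*} [Fintype T]
    (μ : T → ℝ) (hμ : ∀ t, 0 < μ t)
    {E : Type*} [AddCommGroup E] [Module ℝ E] [FiniteDimensional ℝ E]
    (G : E →ₗ[ℝ] (T → EuclideanSpace ℝ (Fin d))) (hG : Function.Injective G)
    (ℓ : E →ₗ[ℝ] ℝ)
    (φ φ' : ℝ → ℝ) (hN : IsNFunction φ φ')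
    (J : E → ℝ) (hJ : ∀ v, J v = (∑ t, μ t * φ ‖G v t‖) - ℓ v)
    (Jstar : (T → EuclideanSpace ℝ (Fin d)) → ℝ)
    (hJstar : ∀ τ, Jstar τ = ∑ t, μ t * conj φ ‖τ t‖)
    (C : Set (T → EuclideanSpace ℝ (Fin d)))
    (hC : C = {τ | ∀ w : E, (∑ t, μ t * (inner ℝ (τ t) (G w t) : ℝ)) = ℓ w}) :
    (∃ u : E, ∀ v : E, J u ≤ J v) ∧
    C.Nonempty ∧
    (∃ σ ∈ C, ∀ τ ∈ C, Jstar σ ≤ Jstar τ) ∧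
    (∃ (u : E) (σ : T → EuclideanSpace ℝ (Fin d)),
      (∀ v : E, J u ≤ J v) ∧ σ ∈ C ∧ (∀ τ ∈ C, Jstar σ ≤ Jstar τ) ∧
      J u = - Jstar σ) := by
  obtain ⟨u, hu⟩ := exists_forall_comp_sub_le_of_superlinear G hG hN.continuous_modular
    (hN.exists_mul_norm_sub_le_modular hμ) ℓ
  have hJu : ∀ v, J u ≤ J v := fun v => by rw [hJ, hJ]; exact hu v
  obtain ⟨g, hgℓ, hgsub⟩ := exists_subgradient_comp_eq (hN.convexOn_modular fun t => (hμ t).le)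
    hN.continuous_modular G ℓ (x₀ := G u) fun v => by
      have := hu (u + v)
      rw [map_add, map_add] at this
      linarith
  obtain ⟨σ, hσ⟩ := exists_sum_mul_inner_eq (fun t => (hμ t).ne') g
  have hσC : σ ∈ C := hC ▸ fun w => (hσ (G w)).trans (hgℓ w)
  have hweak : ∀ τ ∈ C, -Jstar τ ≤ J u := fun τ hτ => by
    have := hN.sum_inner_le_modular_add_modular_conj (fun t => (hμ t).le) τ (G u)
    rw [hC] at hτ
    rw [hτ u, modular, modular] at this
    rw [hJ, hJstar]
    linarith
  have hstrong : J u = -Jstar σ := by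
    have := hN.modular_conj_eq_of_subgradient hμ (σ := σ) (x := G u) fun η => by
      have := hgsub η
      rwa [← hσ] at this
    rw [hσ, hgℓ, modular, modular] at this
    rw [hJ, hJstar]
    linarith
  have hσmin : ∀ τ ∈ C, Jstar σ ≤ Jstar τ := fun τ hτ => by linarith [hweak τ hτ]
  exact ⟨⟨u, hJu⟩, ⟨σ, hσC⟩, ⟨σ, hσC, hσmin⟩, u, σ, hJu, hσC, hσmin, hstrong⟩

/-- discrete duality in the finite discrete setting. There exists a
minimizer `u` of `J` over `E`, the constraint set `C` is nonempty, there exists a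
minimizer `σ` of `J*` over `C`, and `min_E J = − min_C J*`. -/
theorem discrete_duality {d : ℕ} (hd : 1 ≤ d)
    {T : Type*} [Fintype T] [Nonempty T]
    (μ : T → ℝ) (hμ : ∀ t, 0 < μ t)
    {E : Type*} [AddCommGroup E] [Module ℝ E] [FiniteDimensional ℝ E]
    (G : E →ₗ[ℝ] (T → EuclideanSpace ℝ (Fin d))) (hG : Function.Injective G)
    (ℓ : E →ₗ[ℝ] ℝ)
    (φ φ' : ℝ → ℝ) (hN : IsNFunction φ φ')
    (J : E → ℝ) (hJ : ∀ v, J v = (∑ t, μ t * φ ‖G v t‖) - ℓ v)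
    (Jstar : (T → EuclideanSpace ℝ (Fin d)) → ℝ)
    (hJstar : ∀ τ, Jstar τ = ∑ t, μ t * conj φ ‖τ t‖)
    (C : Set (T → EuclideanSpace ℝ (Fin d)))
    (hC : C = {τ | ∀ w : E, (∑ t, μ t * (inner ℝ (τ t) (G w t) : ℝ)) = ℓ w}) :
    (∃ u : E, ∀ v : E, J u ≤ J v) ∧
    C.Nonempty ∧
    (∃ σ ∈ C, ∀ τ ∈ C, Jstar σ ≤ Jstar τ) ∧
    (∃ (u : E) (σ : T → EuclideanSpace ℝ (Fin d)),
      (∀ v : E, J u ≤ J v) ∧ σ ∈ C ∧ (∀ τ ∈ C, Jstar σ ≤ Jstar τ) ∧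
      J u = - Jstar σ) :=
  discrete_duality_general μ hμ G hG ℓ φ φ' hN J hJ Jstar hJstar C hC
end

section
/- (Equivalence of the dual Kačanov saddle-point system and the weighted linearization.) In the finite discrete setting, assume φ' is strictly increasing and continuous, and let ψ := (φ')⁻¹ denote its inverse, so ψ(t) > 0 for all t > 0. Let σ_n : T → ℝ^d satisfy (σ_n)_t ≠ 0 for all t ∈ T, and set b_t := |(σ_n)_t| / ψ(|(σ_n)_t|) > 0. Then a pair (σ_{n+1}, u_{n+1}) with σ_{n+1} : T → ℝ^d and u_{n+1} ∈ E satisfies the saddle-point system [Σ_{t∈T} μ_t (ψ(|(σ_n)_t|)/|(σ_n)_t|) (σ_{n+1})_t·τ_t = Σ_{t∈T} μ_t (G u_{n+1})_t·τ_t for all τ : T → ℝ^d, and Σ_{t∈T} μ_t (σ_{n+1})_t·(G v)_t = ℓ(v) for all v ∈ E] if and only if u_{n+1} satisfies the weighted linear equation Σ_{t∈T} μ_t b_t (G u_{n+1})_t·(G v)_t = ℓ(v) for all v ∈ E and (σ_{n+1})_t = b_t (G u_{n+1})_t for all t ∈ T. -/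
open MeasureTheory

section WeightedInner

variable {T F : Type*} [Fintype T] [NormedAddCommGroup F] [InnerProductSpace ℝ F]
  {μ : T → ℝ}

/-- Testing with `τ = x - y` leaves a sum of the nonnegative terms `μ t * ‖x t - y t‖ ^ 2`. -/
theorem forall_sum_mul_inner_eq_iff (hμ : ∀ t, 0 < μ t) {x y : T → F} :
    (∀ τ : T → F, ∑ t, μ t * inner ℝ (x t) (τ t) = ∑ t, μ t * inner ℝ (y t) (τ t)) ↔ x = y := by
  refine ⟨fun h => ?_, fun h _ => h ▸ rfl⟩
  have hsum : ∑ t, μ t * ‖x t - y t‖ ^ 2 = 0 := by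
    simp only [← real_inner_self_eq_norm_sq, inner_sub_left, mul_sub, Finset.sum_sub_distrib]
    exact sub_eq_zero.mpr (h (x - y))
  funext t
  have hterm := (Finset.sum_eq_zero_iff_of_nonneg
    (fun t _ => mul_nonneg (hμ t).le (sq_nonneg ‖x t - y t‖))).mp hsum t (Finset.mem_univ t)
  simpa [(hμ t).ne', sub_eq_zero] using hterm

theorem saddlePointSystem_iff_weightedEquation (hμ : ∀ t, 0 < μ t) {b c : T → ℝ} (hc : ∀ t, c t ≠ 0)
    (hbc : ∀ t, b t = (c t)⁻¹) {E : Type*} (G : E → T → F) (ℓ : E → ℝ) (σ : T → F) (u : E) :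
    ((∀ τ : T → F, ∑ t, μ t * (c t * inner ℝ (σ t) (τ t)) = ∑ t, μ t * inner ℝ (G u t) (τ t)) ∧
      ∀ v, ∑ t, μ t * inner ℝ (σ t) (G v t) = ℓ v) ↔
    ((∀ v, ∑ t, μ t * (b t * inner ℝ (G u t) (G v t)) = ℓ v) ∧ ∀ t, σ t = b t • G u t) := by
  have hconstitutive :
      (∀ τ : T → F, ∑ t, μ t * (c t * inner ℝ (σ t) (τ t)) = ∑ t, μ t * inner ℝ (G u t) (τ t)) ↔
        ∀ t, σ t = b t • G u t := by
    simp only [← real_inner_smul_left (σ _)]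
    rw [forall_sum_mul_inner_eq_iff hμ, funext_iff]
    exact forall_congr' fun t => hbc t ▸ (eq_inv_smul_iff₀ (hc t)).symm
  rw [hconstitutive, and_comm]
  refine and_congr_left fun hσ => ?_
  simp only [hσ, real_inner_smul_left]

end WeightedInner

theorem dual_kacanov_equivalence_general {d : ℕ}
    {T : Type*} [Fintype T]
    (μ : T → ℝ) (hμ : ∀ t, 0 < μ t)
    {E : Type*} [AddCommGroup E] [Module ℝ E]
    (G : E →ₗ[ℝ] (T → EuclideanSpace ℝ (Fin d)))
    (ℓ : E →ₗ[ℝ] ℝ)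
    (ψ : ℝ → ℝ)
    (hψ_pos : ∀ t > (0:ℝ), 0 < ψ t)
    (σn : T → EuclideanSpace ℝ (Fin d)) (hσn : ∀ t, σn t ≠ 0)
    (b : T → ℝ) (hb : ∀ t, b t = ‖σn t‖ / ψ ‖σn t‖)
    (σn1 : T → EuclideanSpace ℝ (Fin d)) (un1 : E) :
    ((∀ τ : T → EuclideanSpace ℝ (Fin d),
        (∑ t, μ t * ((ψ ‖σn t‖ / ‖σn t‖) * (inner ℝ (σn1 t) (τ t) : ℝ)))
          = ∑ t, μ t * (inner ℝ (G un1 t) (τ t) : ℝ)) ∧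
      (∀ v : E, (∑ t, μ t * (inner ℝ (σn1 t) (G v t) : ℝ)) = ℓ v))
    ↔
    ((∀ v : E, (∑ t, μ t * (b t * (inner ℝ (G un1 t) (G v t) : ℝ))) = ℓ v) ∧
      (∀ t, σn1 t = b t • G un1 t)) := by
  have hweight_ne : ∀ t, ψ ‖σn t‖ / ‖σn t‖ ≠ 0 := fun t =>
    div_ne_zero (hψ_pos _ (norm_pos_iff.mpr (hσn t))).ne' (norm_ne_zero_iff.mpr (hσn t))
  exact saddlePointSystem_iff_weightedEquation hμ hweight_ne (fun t => by rw [hb, inv_div]) G ℓ σn1 un1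

/-- equivalence of the dual Kačanov saddle-point system and the
weighted linearization. With `ψ = (φ')⁻¹` the inverse of the strictly increasing
continuous `φ'`, `(σ_n)_t ≠ 0` and `b_t = |(σ_n)_t|/ψ(|(σ_n)_t|)`, the pair
`(σ_{n+1}, u_{n+1})` solves the saddle-point system iff `u_{n+1}` solves the
weighted linear equation and `(σ_{n+1})_t = b_t (G u_{n+1})_t` for all `t`. -/
theorem dual_kacanov_equivalence {d : ℕ} (hd : 1 ≤ d)
    {T : Type*} [Fintype T] [Nonempty T]
    (μ : T → ℝ) (hμ : ∀ t, 0 < μ t)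
    {E : Type*} [AddCommGroup E] [Module ℝ E] [FiniteDimensional ℝ E]
    (G : E →ₗ[ℝ] (T → EuclideanSpace ℝ (Fin d))) (hG : Function.Injective G)
    (ℓ : E →ₗ[ℝ] ℝ)
    (φ φ' : ℝ → ℝ) (hN : IsNFunction φ φ')
    (hsm : StrictMonoOn φ' (Set.Ici 0)) (hcont : ContinuousOn φ' (Set.Ici 0))
    (ψ : ℝ → ℝ)
    (hψ_left : ∀ t ≥ (0:ℝ), ψ (φ' t) = t)
    (hψ_right : ∀ s ≥ (0:ℝ), 0 ≤ ψ s ∧ φ' (ψ s) = s)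
    (hψ_pos : ∀ t > (0:ℝ), 0 < ψ t)
    (σn : T → EuclideanSpace ℝ (Fin d)) (hσn : ∀ t, σn t ≠ 0)
    (b : T → ℝ) (hb : ∀ t, b t = ‖σn t‖ / ψ ‖σn t‖)
    (σn1 : T → EuclideanSpace ℝ (Fin d)) (un1 : E) :
    ((∀ τ : T → EuclideanSpace ℝ (Fin d),
        (∑ t, μ t * ((ψ ‖σn t‖ / ‖σn t‖) * (inner ℝ (σn1 t) (τ t) : ℝ)))
          = ∑ t, μ t * (inner ℝ (G un1 t) (τ t) : ℝ)) ∧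
      (∀ v : E, (∑ t, μ t * (inner ℝ (σn1 t) (G v t) : ℝ)) = ℓ v))
    ↔
    ((∀ v : E, (∑ t, μ t * (b t * (inner ℝ (G un1 t) (G v t) : ℝ))) = ℓ v) ∧
      (∀ t, σn1 t = b t • G un1 t)) :=
  dual_kacanov_equivalence_general μ hμ G ℓ ψ hψ_pos σn hσn b hb σn1 un1
end
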